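/- arXiv:2011.15057 — 2 statements merged into one kernel-verified Lean document; each statement's English description precedes it below -/
import Mathlib

section
/- For every compact set K contained in Ω, sup_{x∈K} |ρ_ε(x)| → 0 as ε → 0⁺. (Asymptotic electroneutrality of Poisson–Boltzmann equilibria with two uniform selective boundary conditions.) -/
open MeasureTheory Real Filter Set Topology

/-- The Laplacian: sum of second partial derivatives. -/
noncomputable def lap {d : ℕ} (f : EuclideanSpace ℝ (Fin d) → ℝ) (x : EuclideanSpace ℝ (Fin d)) : ℝ :=
  ∑ i : Fin d, fderiv ℝ (fun y => fderiv ℝ f y (EuclideanSpace.single i 1)) x (EuclideanSpace.single i 1)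

variable {d : ℕ}

lemma lap_neg (f : EuclideanSpace ℝ (Fin d) → ℝ) (x : EuclideanSpace ℝ (Fin d)) :
    lap (fun y => -(f y)) x = - lap f x := by
  unfold lap
  rw [← Finset.sum_neg_distrib]
  apply Finset.sum_congr rfl
  intro i _
  have h1 : (fun y => fderiv ℝ (fun z => -(f z)) y (EuclideanSpace.single i 1))
      = fun y => -((fun z => fderiv ℝ f z (EuclideanSpace.single i 1)) y) := by
    funext y; rw [fderiv_fun_neg]; simp
  rw [h1, fderiv_fun_neg]; simp

lemma lap_nonpos_at_localmax {f : EuclideanSpace ℝ (Fin d) → ℝ} {U : Set (EuclideanSpace ℝ (Fin d))}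
    (hU : IsOpen U) {x : EuclideanSpace ℝ (Fin d)} (hx : x ∈ U)
    (hf : ContDiffOn ℝ 2 f U) (hmax : IsLocalMax f x) : lap f x ≤ 0 := by
  have hfAt : ∀ y ∈ U, ContDiffAt ℝ 2 f y := fun y hy => (hf y hy).contDiffAt (hU.mem_nhds hy)
  apply Finset.sum_nonpos
  intro i _
  set e : EuclideanSpace ℝ (Fin d) := EuclideanSpace.single i 1 with he
  set F : EuclideanSpace ℝ (Fin d) → ℝ := fun y => fderiv ℝ f y e with hF
  set a : ℝ := fderiv ℝ F x e with ha
  show a ≤ 0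
  by_contra hpos
  push_neg at hpos
  -- line
  have hline : ∀ t : ℝ, HasDerivAt (fun s : ℝ => x + s • e) e t := by
    intro t
    simpa using ((hasDerivAt_id t).smul_const e).const_add x
  set L : ℝ → EuclideanSpace ℝ (Fin d) := fun t => x + t • e with hL
  have hL0 : L 0 = x := by simp [hL]
  have hLc : Continuous L := by
    apply continuous_const.add (continuous_id.smul continuous_const)
  -- F differentiable at x
  have hFdiff : DifferentiableAt ℝ F x := by
    have h1 : ContDiffAt ℝ 1 (fderiv ℝ f) x := (hfAt x hx).fderiv_right (by norm_num)
    exact ((ContinuousLinearMap.apply ℝ ℝ e).differentiable.differentiableAt).comp x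
      (h1.differentiableAt one_ne_zero)
  set g : ℝ → ℝ := fun t => f (L t) with hg
  set h : ℝ → ℝ := fun t => F (L t) with hh
  have hgderiv : ∀ t : ℝ, L t ∈ U → HasDerivAt g (h t) t := by
    intro t ht
    have hd : DifferentiableAt ℝ f (L t) := (hfAt _ ht).differentiableAt (by norm_num)
    exact hd.hasFDerivAt.comp_hasDerivAt t (hline t)
  have hhderiv : HasDerivAt h a 0 := by
    have hFd' : HasFDerivAt F (fderiv ℝ F x) (L 0) := by rw [hL0]; exact hFdiff.hasFDerivAt
    exact hFd'.comp_hasDerivAt 0 (hline 0)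
  have hgmax : IsLocalMax g 0 := by
    have : Tendsto L (nhds 0) (nhds x) := by rw [← hL0]; exact hLc.continuousAt
    have h2 := this.eventually hmax
    have hgx : g 0 = f x := by simp [hg, hL0]
    unfold IsLocalMax IsMaxFilter
    rw [hgx]
    exact h2
  have hh0 : h 0 = 0 := by
    have := hgmax.hasDerivAt_eq_zero (hgderiv 0 (by rwa [hL0]))
    simpa [hh, hL0] using this
  -- h positive on right
  have hslope : Tendsto (fun t : ℝ => h t / t) (nhdsWithin 0 (Set.Iio 0 ∪ Set.Ioi 0)) (nhds a) := by
    have := hasDerivAt_iff_tendsto_slope.mp hhderiv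
    have heq : (slope h 0) = fun t : ℝ => h t / t := by
      funext t; simp [slope_def_field, hh0, div_eq_inv_mul]
    rw [heq] at this
    convert this using 2
    rw [Set.Iio_union_Ioi]
  have hpos' : ∀ᶠ t in nhdsWithin (0:ℝ) (Set.Ioi 0), h t > 0 := by
    have h1 : Tendsto (fun t : ℝ => h t / t) (nhdsWithin 0 (Set.Ioi 0)) (nhds a) :=
      hslope.mono_left (nhdsWithin_mono 0 Set.subset_union_right)
    have h2 : ∀ᶠ t in nhdsWithin (0:ℝ) (Set.Ioi 0), h t / t > 0 :=
      h1.eventually (eventually_gt_nhds hpos)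
    filter_upwards [h2, self_mem_nhdsWithin] with t ht ht'
    have : (0:ℝ) < t := ht'
    have h3 := mul_pos ht this
    rwa [div_mul_cancel₀ _ (ne_of_gt this)] at h3
  -- good nbhd facts
  have E1 : ∀ᶠ t in nhds (0:ℝ), L t ∈ U := by
    have : Tendsto L (nhds 0) (nhds x) := by rw [← hL0]; exact hLc.continuousAt
    exact this.eventually (hU.eventually_mem hx)
  have E2 : ∀ᶠ t in nhds (0:ℝ), g t ≤ g 0 := hgmax
  obtain ⟨δ₁, hδ₁, hE⟩ := Metric.eventually_nhds_iff.mp (E1.and E2)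
  obtain ⟨δ₂, hδ₂, hball⟩ := Metric.mem_nhdsWithin_iff.mp hpos'
  have hP : ∀ t : ℝ, dist t 0 < δ₂ → t ∈ Set.Ioi (0:ℝ) → h t > 0 := by
    intro t h1 h2
    exact hball ⟨Metric.mem_ball.mpr h1, h2⟩
  set δ : ℝ := min δ₁ δ₂ / 2 with hδdef
  have hδpos : 0 < δ := by positivity
  have hδlt1 : δ < δ₁ := by
    have := min_le_left δ₁ δ₂; simp only [hδdef]; linarith
  have hδlt2 : δ < δ₂ := by
    have := min_le_right δ₁ δ₂; simp only [hδdef]; linarith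
  have hmem : ∀ t ∈ Set.Icc (0:ℝ) δ, L t ∈ U ∧ g t ≤ g 0 := by
    intro t ht
    apply hE
    rw [Real.dist_eq, sub_zero, abs_of_nonneg ht.1]
    linarith [ht.2]
  have hcont : ContinuousOn g (Set.Icc (0:ℝ) δ) := by
    intro t ht
    exact ((hgderiv t (hmem t ht).1).differentiableAt.continuousAt).continuousWithinAt
  have hmono : StrictMonoOn g (Set.Icc (0:ℝ) δ) := by
    apply strictMonoOn_of_deriv_pos (convex_Icc _ _) hcont
    intro t ht
    rw [interior_Icc] at ht
    have htmem : L t ∈ U := (hmem t ⟨le_of_lt ht.1, le_of_lt ht.2⟩).1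
    rw [(hgderiv t htmem).deriv]
    apply hP
    · rw [Real.dist_eq, sub_zero, abs_of_pos ht.1]; linarith [ht.2]
    · exact ht.1

  have hlt : g 0 < g δ := hmono ⟨le_refl 0, le_of_lt hδpos⟩ ⟨le_of_lt hδpos, le_refl δ⟩ hδpos
  have := (hmem δ ⟨le_of_lt hδpos, le_refl δ⟩).2
  linarith

lemma diffAt_fderiv_apply {f : EuclideanSpace ℝ (Fin d) → ℝ} {x v : EuclideanSpace ℝ (Fin d)}
    (hf : ContDiffAt ℝ 2 f x) : DifferentiableAt ℝ (fun y => fderiv ℝ f y v) x := by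
  have h1 : ContDiffAt ℝ 1 (fderiv ℝ f) x := hf.fderiv_right (by norm_num)
  exact ((ContinuousLinearMap.apply ℝ ℝ v).differentiable.differentiableAt).comp x
    (h1.differentiableAt one_ne_zero)

lemma lap_sub {f g : EuclideanSpace ℝ (Fin d) → ℝ} {U : Set (EuclideanSpace ℝ (Fin d))}
    (hU : IsOpen U) {x : EuclideanSpace ℝ (Fin d)} (hx : x ∈ U)
    (hf : ContDiffOn ℝ 2 f U) (hg : ContDiffOn ℝ 2 g U) :
    lap (fun y => f y - g y) x = lap f x - lap g x := by
  have hfAt : ∀ y ∈ U, ContDiffAt ℝ 2 f y := fun y hy => (hf y hy).contDiffAt (hU.mem_nhds hy)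
  have hgAt : ∀ y ∈ U, ContDiffAt ℝ 2 g y := fun y hy => (hg y hy).contDiffAt (hU.mem_nhds hy)
  unfold lap
  rw [← Finset.sum_sub_distrib]
  apply Finset.sum_congr rfl
  intro i _
  set e : EuclideanSpace ℝ (Fin d) := EuclideanSpace.single i 1 with he
  have hev : (fun y => fderiv ℝ (fun z => f z - g z) y e)
      =ᶠ[nhds x] (fun y => fderiv ℝ f y e - fderiv ℝ g y e) := by
    filter_upwards [hU.mem_nhds hx] with y hy
    rw [fderiv_fun_sub ((hfAt y hy).differentiableAt (by norm_num))
      ((hgAt y hy).differentiableAt (by norm_num))]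
    simp
  rw [hev.fderiv_eq]
  rw [fderiv_fun_sub (diffAt_fderiv_apply (hfAt x hx)) (diffAt_fderiv_apply (hgAt x hx))]
  simp

section psi
variable (x₀ : EuclideanSpace ℝ (Fin d)) (M lam rr : ℝ)

lemma psi_contDiff :
    ContDiff ℝ 2 (fun y : EuclideanSpace ℝ (Fin d) =>
      M * Real.exp (lam * (∑ i, (y i - x₀ i)^2) - lam * rr^2)) := by
  apply ContDiff.mul contDiff_const
  apply ContDiff.exp
  apply ContDiff.sub _ contDiff_const
  apply ContDiff.mul contDiff_const
  apply ContDiff.sum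
  intro i _
  exact ((EuclideanSpace.proj (𝕜 := ℝ) i).contDiff.sub contDiff_const).pow 2

lemma psi_lap (x : EuclideanSpace ℝ (Fin d)) :
    lap (fun y => M * Real.exp (lam * (∑ i, (y i - x₀ i)^2) - lam * rr^2)) x
      = (M * Real.exp (lam * (∑ i, (x i - x₀ i)^2) - lam * rr^2)) *
        (2*lam*(d:ℝ) + 4*lam^2 * (∑ i, (x i - x₀ i)^2)) := by
  set q : EuclideanSpace ℝ (Fin d) → ℝ := fun y => ∑ i, (y i - x₀ i)^2 with hqdef
  set Lq : EuclideanSpace ℝ (Fin d) → (EuclideanSpace ℝ (Fin d) →L[ℝ] ℝ) :=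
    fun y => ∑ i : Fin d, (2*(y i - x₀ i)) • (EuclideanSpace.proj (𝕜 := ℝ) i) with hLqdef
  have hq : ∀ y, HasFDerivAt q (Lq y) y := by
    intro y
    apply HasFDerivAt.fun_sum
    intro i _
    show HasFDerivAt (fun z : EuclideanSpace ℝ (Fin d) => (z i - x₀ i)^2)
      ((2*(y i - x₀ i)) • EuclideanSpace.proj (𝕜 := ℝ) i) y
    have h1 : HasFDerivAt (fun z : EuclideanSpace ℝ (Fin d) => z i - x₀ i)
        (EuclideanSpace.proj (𝕜 := ℝ) i) y :=
      (EuclideanSpace.proj (𝕜 := ℝ) i).hasFDerivAt.sub_const (x₀ i)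
    have h2 : HasFDerivAt (fun z : EuclideanSpace ℝ (Fin d) => (z i - x₀ i) * (z i - x₀ i))
        ((y i - x₀ i) • EuclideanSpace.proj (𝕜 := ℝ) i + (y i - x₀ i) • EuclideanSpace.proj (𝕜 := ℝ) i) y :=
      h1.mul h1
    convert h2 using 1
    · funext z; ring
    · rw [two_mul, add_smul]
  have hLqe : ∀ y (j : Fin d), Lq y (EuclideanSpace.single j 1) = 2*(y j - x₀ j) := by
    intro y j
    rw [hLqdef]
    rw [ContinuousLinearMap.sum_apply]
    have : ∀ i : Fin d, ((2*(y i - x₀ i)) • (EuclideanSpace.proj (𝕜 := ℝ) i))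
        (EuclideanSpace.single j 1) = if i = j then 2*(y i - x₀ i) else 0 := by
      intro i
      rw [ContinuousLinearMap.smul_apply]
      have hpr : (EuclideanSpace.proj (𝕜 := ℝ) i) (EuclideanSpace.single j (1:ℝ))
          = (EuclideanSpace.single j (1:ℝ)) i := rfl
      rw [hpr, EuclideanSpace.single_apply]
      by_cases h : i = j
      · subst h; simp
      · simp [h, Ne.symm h]
    simp only [this]
    simp
  set psi : EuclideanSpace ℝ (Fin d) → ℝ :=
    fun y => M * Real.exp (lam * q y - lam * rr^2) with hpsidef
  have hpsi : ∀ y, HasFDerivAt psi ((psi y * lam) • Lq y) y := by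
    intro y
    have hinner : HasFDerivAt (fun z => lam * q z - lam * rr^2) (lam • Lq y) y :=
      ((hq y).const_mul lam).sub_const _
    have hexp := hinner.exp
    have := hexp.const_mul M
    have heq : (psi y * lam) • Lq y = M • Real.exp (lam * q y - lam * rr^2) • lam • Lq y := by
      rw [hpsidef]
      simp only [smul_smul]
      congr 1
      ring
    rw [heq]; exact this
  have hD1 : ∀ (j : Fin d), (fun y => fderiv ℝ psi y (EuclideanSpace.single j 1))
      = fun y => psi y * (2*lam*(y j - x₀ j)) := by
    intro j
    funext y
    rw [(hpsi y).fderiv]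
    rw [ContinuousLinearMap.smul_apply, hLqe]
    simp; ring
  have hterm : ∀ (j : Fin d),
      fderiv ℝ (fun y => fderiv ℝ psi y (EuclideanSpace.single j 1)) x (EuclideanSpace.single j 1)
        = psi x * (2*lam) + (psi x * (4*lam^2)) * (x j - x₀ j)^2 := by
    intro j
    rw [hD1 j]
    have hlin : HasFDerivAt (fun y : EuclideanSpace ℝ (Fin d) => 2*lam*(y j - x₀ j))
        ((2*lam) • (EuclideanSpace.proj (𝕜 := ℝ) j)) x := by
      have h1 : HasFDerivAt (fun z : EuclideanSpace ℝ (Fin d) => z j - x₀ j)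
          (EuclideanSpace.proj (𝕜 := ℝ) j) x :=
        (EuclideanSpace.proj (𝕜 := ℝ) j).hasFDerivAt.sub_const (x₀ j)
      exact h1.const_mul (2*lam)
    have hprod := (hpsi x).mul hlin
    have hprod' : HasFDerivAt (fun y => psi y * (2*lam*(y j - x₀ j)))
        (psi x • (2 * lam) • EuclideanSpace.proj (𝕜 := ℝ) j + (2 * lam * (x j - x₀ j)) • (psi x * lam) • Lq x) x :=
      hprod
    rw [hprod'.fderiv]
    simp only [ContinuousLinearMap.add_apply, ContinuousLinearMap.smul_apply]
    rw [hLqe]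
    have hpr : (EuclideanSpace.proj (𝕜 := ℝ) j) (EuclideanSpace.single j (1:ℝ))
        = (EuclideanSpace.single j (1:ℝ)) j := rfl
    rw [hpr, EuclideanSpace.single_apply]
    simp only [smul_eq_mul, if_true, eq_self_iff_true]
    ring
  show (∑ j : Fin d, fderiv ℝ (fun y => fderiv ℝ psi y (EuclideanSpace.single j 1)) x
    (EuclideanSpace.single j 1)) = _
  rw [Finset.sum_congr rfl (fun j _ => hterm j)]
  rw [Finset.sum_add_distrib, Finset.sum_const, ← Finset.mul_sum]
  have hqx : (∑ j : Fin d, (x j - x₀ j)^2) = q x := rfl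
  rw [hqx, Finset.card_univ, Fintype.card_fin, nsmul_eq_mul]
  show _ = psi x * (2*lam*(d:ℝ) + 4*lam^2 * q x)
  ring
end psi

lemma max_principle_bound
    {Ω : Set (EuclideanSpace ℝ (Fin d))} (hΩopen : IsOpen Ω)
    (hΩbdd : Bornology.IsBounded Ω) (hne : Ω.Nonempty)
    {u : EuclideanSpace ℝ (Fin d) → ℝ} (hu2 : ContDiffOn ℝ 2 u Ω)
    (huc : ContinuousOn u (closure Ω))
    {ε c : ℝ} (hε : 0 < ε) (hc : 0 < c)
    (hPDE : ∀ x ∈ Ω, ε * lap u x = c * Real.sinh (u x))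
    {M₀ : ℝ} (hM₀ : 0 ≤ M₀) (hbd : ∀ x ∈ frontier Ω, u x ≤ M₀) :
    ∀ x ∈ closure Ω, u x ≤ M₀ := by
  have hcomp : IsCompact (closure Ω) := hΩbdd.isCompact_closure
  obtain ⟨z, hzmem, hzmax⟩ := hcomp.exists_isMaxOn (hne.mono subset_closure) huc
  have hkey : u z ≤ M₀ := by
    by_cases hz : z ∈ Ω
    · -- interior maximum
      have hloc : IsLocalMax u z :=
        hzmax.isLocalMax (Filter.mem_of_superset (hΩopen.mem_nhds hz) subset_closure)
      have hlap : lap u z ≤ 0 := lap_nonpos_at_localmax hΩopen hz hu2 hloc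
      have h1 : c * Real.sinh (u z) ≤ 0 := by
        rw [← hPDE z hz]; exact mul_nonpos_of_nonneg_of_nonpos hε.le hlap
      have h2 : Real.sinh (u z) ≤ 0 := by
        have h1' : c * Real.sinh (u z) ≤ c * 0 := by simpa using h1
        exact le_of_mul_le_mul_left h1' hc
      have h3 : Real.sinh (u z) ≤ Real.sinh 0 := by rwa [Real.sinh_zero]
      have : u z ≤ 0 := Real.sinh_le_sinh.mp h3
      linarith
    · have hzf : z ∈ frontier Ω := by
        rw [hΩopen.frontier_eq]; exact ⟨hzmem, hz⟩
      exact hbd z hzf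
  intro x hx
  exact le_trans (hzmax hx) hkey

lemma comparison_bound
    {Ω : Set (EuclideanSpace ℝ (Fin d))} (hΩopen : IsOpen Ω)
    {u : EuclideanSpace ℝ (Fin d) → ℝ} (hu2 : ContDiffOn ℝ 2 u Ω)
    {ε c : ℝ} (hε : 0 < ε) (hc : 0 < c)
    (hPDE : ∀ x ∈ Ω, ε * lap u x = c * Real.sinh (u x))
    {x₀ : EuclideanSpace ℝ (Fin d)} {rr M lam : ℝ}
    (hr : 0 < rr) (hM : 0 < M) (hlam : 0 < lam)
    (hball : Metric.closedBall x₀ rr ⊆ Ω)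
    (hbd : ∀ x ∈ Metric.closedBall x₀ rr, u x ≤ M)
    (hlam2 : ε * (2*lam*(d:ℝ) + 4*lam^2*rr^2) ≤ c) :
    u x₀ ≤ M * Real.exp (-(lam * rr^2)) := by
  set psi : EuclideanSpace ℝ (Fin d) → ℝ :=
    fun y => M * Real.exp (lam * (∑ i, (y i - x₀ i)^2) - lam * rr^2) with hpsidef
  have hpsiC : ContDiff ℝ 2 psi := psi_contDiff x₀ M lam rr
  have hqnorm : ∀ y : EuclideanSpace ℝ (Fin d),
      (∑ i, (y i - x₀ i)^2) = dist y x₀ ^ 2 := by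
    intro y
    rw [dist_eq_norm, EuclideanSpace.norm_eq, Real.sq_sqrt]
    · apply Finset.sum_congr rfl
      intro i _
      simp [Real.norm_eq_abs, sq_abs]
    · positivity
  have hpsipos : ∀ y, 0 < psi y := fun y => mul_pos hM (Real.exp_pos _)
  have hpsix₀ : psi x₀ = M * Real.exp (-(lam * rr^2)) := by
    rw [hpsidef]
    simp only
    congr 1
    congr 1
    rw [hqnorm, dist_self]
    ring
  set v : EuclideanSpace ℝ (Fin d) → ℝ := fun y => u y - psi y with hvdef
  have hvc : ContinuousOn v (Metric.closedBall x₀ rr) := by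
    apply ContinuousOn.sub
    · exact (hu2.continuousOn).mono hball
    · exact hpsiC.continuous.continuousOn
  obtain ⟨z, hzmem, hzmax⟩ := (isCompact_closedBall x₀ rr).exists_isMaxOn
    ⟨x₀, Metric.mem_closedBall_self hr.le⟩ hvc
  have hvz : v z ≤ 0 := by
    by_contra hpos
    push_neg at hpos
    have hzΩ : z ∈ Ω := hball hzmem
    have hzlt : dist z x₀ < rr := by
      rcases lt_or_eq_of_le (Metric.mem_closedBall.mp hzmem) with h | h
      · exact h
      · exfalso
        have : psi z = M := by
          rw [hpsidef]; simp only
          rw [hqnorm, h]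
          simp
        have h2 : u z ≤ M := hbd z hzmem
        rw [hvdef] at hpos
        simp only at hpos
        linarith
    have hloc : IsLocalMax v z := by
      apply hzmax.isLocalMax
      exact Filter.mem_of_superset
        (Metric.isOpen_ball.mem_nhds (Metric.mem_ball.mpr hzlt)) Metric.ball_subset_closedBall
    have hv2 : ContDiffOn ℝ 2 v Ω := hu2.sub (hpsiC.contDiffOn)
    have hlapv : lap v z ≤ 0 := lap_nonpos_at_localmax hΩopen hzΩ hv2 hloc
    have hlapsub : lap v z = lap u z - lap psi z :=
      lap_sub hΩopen hzΩ hu2 (hpsiC.contDiffOn)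
    have hlappsi : lap psi z = psi z * (2*lam*(d:ℝ) + 4*lam^2 * (∑ i, (z i - x₀ i)^2)) :=
      psi_lap x₀ M lam rr z
    have hqle : (∑ i, (z i - x₀ i)^2) ≤ rr^2 := by
      rw [hqnorm]
      have := Metric.mem_closedBall.mp hzmem
      exact pow_le_pow_left₀ dist_nonneg this 2
    have hlap_le : ε * lap psi z ≤ c * psi z := by
      rw [hlappsi]
      have h1 : (2*lam*(d:ℝ) + 4*lam^2 * (∑ i, (z i - x₀ i)^2)) ≤ (2*lam*(d:ℝ) + 4*lam^2*rr^2) := by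
        nlinarith [hqle, sq_nonneg lam]
      have h2 : 0 < psi z := hpsipos z
      have h3 : ε * (2*lam*(d:ℝ) + 4*lam^2 * (∑ i, (z i - x₀ i)^2)) ≤ c := by
        calc ε * (2*lam*(d:ℝ) + 4*lam^2 * (∑ i, (z i - x₀ i)^2))
            ≤ ε * (2*lam*(d:ℝ) + 4*lam^2*rr^2) := mul_le_mul_of_nonneg_left h1 hε.le
          _ ≤ c := hlam2
      calc ε * (psi z * (2*lam*(d:ℝ) + 4*lam^2 * (∑ i, (z i - x₀ i)^2)))
          = psi z * (ε * (2*lam*(d:ℝ) + 4*lam^2 * (∑ i, (z i - x₀ i)^2))) := by ring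
        _ ≤ psi z * c := mul_le_mul_of_nonneg_left h3 h2.le
        _ = c * psi z := by ring
    have hchain : c * Real.sinh (u z) ≤ c * psi z := by
      rw [← hPDE z hzΩ]
      have : ε * lap u z ≤ ε * lap psi z := by nlinarith [hlapv, hlapsub, hε]
      linarith [hlap_le]
    have hsinh : psi z < Real.sinh (psi z) := Real.self_lt_sinh_iff.mpr (hpsipos z)
    have hlt : c * Real.sinh (u z) < c * Real.sinh (psi z) := by nlinarith [hchain, hsinh, hc]
    have : Real.sinh (u z) < Real.sinh (psi z) := lt_of_mul_lt_mul_left hlt hc.le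
    have huz : u z < psi z := Real.sinh_lt_sinh.mp this
    rw [hvdef] at hpos; simp only at hpos
    linarith
  have hvx₀ : v x₀ ≤ 0 := le_trans (hzmax (Metric.mem_closedBall_self hr.le)) hvz
  rw [hvdef] at hvx₀; simp only at hvx₀
  linarith [hpsix₀ ▸ hvx₀]

lemma lap_const (a : ℝ) (x : EuclideanSpace ℝ (Fin d)) : lap (fun _ => a) x = 0 := by
  unfold lap
  apply Finset.sum_eq_zero
  intro i _
  have h1 : (fun y : EuclideanSpace ℝ (Fin d) =>
      fderiv ℝ (fun _ : EuclideanSpace ℝ (Fin d) => a) y (EuclideanSpace.single i 1))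
      = fun _ => (0:ℝ) := by
    funext y
    rw [fderiv_fun_const]
    simp
  rw [h1, fderiv_fun_const]
  simp

lemma rho_identity {Z₁ Z₂ : ℝ} (hZ₁ : 0 < Z₁) (hZ₂ : 0 < Z₂) (s : ℝ) :
    Real.exp (-s)/Z₁ - Real.exp s/Z₂
      = (2 / Real.sqrt (Z₁*Z₂)) * Real.sinh (Real.log (Z₂/Z₁)/2 - s) := by
  have hs1 : 0 < Real.sqrt Z₁ := Real.sqrt_pos.mpr hZ₁
  have hs2 : 0 < Real.sqrt Z₂ := Real.sqrt_pos.mpr hZ₂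
  have hZ1' : Real.sqrt Z₁ ^ 2 = Z₁ := Real.sq_sqrt hZ₁.le
  have hZ2' : Real.sqrt Z₂ ^ 2 = Z₂ := Real.sq_sqrt hZ₂.le
  have hexpZ : Real.exp (Real.log (Z₂/Z₁)/2) = Real.sqrt Z₂ / Real.sqrt Z₁ := by
    have h1 : Real.exp (Real.log (Z₂/Z₁)/2) ^ 2 = Z₂/Z₁ := by
      rw [sq, ← Real.exp_add,
        show Real.log (Z₂/Z₁)/2 + Real.log (Z₂/Z₁)/2 = Real.log (Z₂/Z₁) by ring,
        Real.exp_log (div_pos hZ₂ hZ₁)]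
    calc Real.exp (Real.log (Z₂/Z₁)/2)
        = Real.sqrt (Real.exp (Real.log (Z₂/Z₁)/2) ^ 2) :=
          (Real.sqrt_sq (Real.exp_pos _).le).symm
      _ = Real.sqrt (Z₂/Z₁) := by rw [h1]
      _ = Real.sqrt Z₂ / Real.sqrt Z₁ := Real.sqrt_div hZ₂.le Z₁
  rw [Real.sinh_eq, Real.exp_sub, neg_sub, Real.exp_sub, hexpZ, Real.sqrt_mul hZ₁.le,
    Real.exp_neg]
  set a := Real.sqrt Z₁ with hadef
  set b := Real.sqrt Z₂ with hbdef
  rw [← hZ1', ← hZ2']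
  have he : Real.exp s ≠ 0 := (Real.exp_pos s).ne'
  field_simp

set_option maxHeartbeats 2000000 in
/-- Asymptotic electroneutrality of Poisson–Boltzmann equilibria with two uniform
selective boundary conditions: for every compact `K ⊆ Ω`,
`sup_{x ∈ K} |ρ_ε(x)| → 0` as `ε → 0⁺`. -/
theorem interior_electroneutrality_uniform_selective
    {d : ℕ} (hd : d = 2 ∨ d = 3)
    (Ω : Set (EuclideanSpace ℝ (Fin d)))
    (hΩopen : IsOpen Ω) (hΩne : Ω.Nonempty) (hΩbdd : Bornology.IsBounded Ω)
    (hΩconn : IsConnected Ω)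
    (W : EuclideanSpace ℝ (Fin d) → ℝ) (hWsmooth : ContDiff ℝ (⊤ : ℕ∞) W)
    (hWbdd : ∃ C, ∀ x, |W x| ≤ C)
    (Z₁ Z₂ : ℝ) (hZ₁ : 0 < Z₁) (hZ₂ : 0 < Z₂)
    (Φ : ℝ → EuclideanSpace ℝ (Fin d) → ℝ)
    (hΦC2 : ∀ ε > (0:ℝ), ContDiffOn ℝ 2 (Φ ε) Ω)
    (hΦC1 : ∀ ε > (0:ℝ), ContDiffOn ℝ 1 (Φ ε) (closure Ω))
    (hPB : ∀ ε > (0:ℝ), ∀ x ∈ Ω,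
      -ε * lap (Φ ε) x = exp (-(Φ ε x)) / Z₁ - exp (Φ ε x) / Z₂)
    (hbc : ∀ ε > (0:ℝ), ∀ x ∈ frontier Ω, Φ ε x = W x)
    (ρ : ℝ → EuclideanSpace ℝ (Fin d) → ℝ)
    (hρ : ∀ ε x, ρ ε x = exp (-(Φ ε x)) / Z₁ - exp (Φ ε x) / Z₂)
    (K : Set (EuclideanSpace ℝ (Fin d))) (hK : IsCompact K) (hKΩ : K ⊆ Ω) :
    Tendsto (fun ε => ⨆ x ∈ K, |ρ ε x|) (𝓝[>] (0:ℝ)) (𝓝 0) := by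
  obtain ⟨C, hC⟩ := hWbdd
  have hC0 : 0 ≤ C := le_trans (abs_nonneg _) (hC 0)
  set Z : ℝ := Real.log (Z₂/Z₁) / 2 with hZdef
  set c : ℝ := 2 / Real.sqrt (Z₁*Z₂) with hcdef
  have hsqZ12 : 0 < Real.sqrt (Z₁*Z₂) := Real.sqrt_pos.mpr (mul_pos hZ₁ hZ₂)
  have hcpos : 0 < c := div_pos two_pos hsqZ12
  have hrho : ∀ s : ℝ, Real.exp (-s)/Z₁ - Real.exp s/Z₂ = c * Real.sinh (Z - s) :=
    fun s => rho_identity hZ₁ hZ₂ s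
  set M : ℝ := |Z| + C + 1 with hMdef
  have hMpos : 0 < M := by positivity
  obtain ⟨r, hrpos, hrsub⟩ := hK.exists_cthickening_subset_open hΩopen hKΩ
  have hballs : ∀ x₀ ∈ K, Metric.closedBall x₀ r ⊆ Ω :=
    fun x₀ hx₀ => (Metric.closedBall_subset_cthickening hx₀ r).trans hrsub
  have hd2 : (2:ℝ) ≤ (d:ℝ) := by rcases hd with h | h <;> rw [h] <;> norm_num
  have hdpos : (0:ℝ) < (d:ℝ) := lt_of_lt_of_le two_pos hd2
  set ε₀ : ℝ := r^2 * c / (2*(d:ℝ)^2) with hε₀def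
  have hε₀pos : 0 < ε₀ := by positivity
  set lam : ℝ → ℝ := fun ε => Real.sqrt (c/(8*ε*r^2)) with hlamdef
  set B : ℝ → ℝ := fun ε => c * Real.sinh (M * Real.exp (-(lam ε * r^2))) with hBdef
  -- upper bound
  have hupper : ∀ᶠ ε in nhdsWithin (0:ℝ) (Set.Ioi 0), (⨆ x ∈ K, |ρ ε x|) ≤ B ε := by
    filter_upwards [Ioo_mem_nhdsGT_of_mem (Set.mem_Ico.mpr ⟨le_refl 0, hε₀pos⟩)] with ε hεmem
    obtain ⟨hεpos, hεlt⟩ := hεmem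
    have hu2 : ContDiffOn ℝ 2 (fun x => Z - Φ ε x) Ω := contDiffOn_const.sub (hΦC2 ε hεpos)
    have huc : ContinuousOn (fun x => Z - Φ ε x) (closure Ω) :=
      continuousOn_const.sub (hΦC1 ε hεpos).continuousOn
    have hPDEu : ∀ x ∈ Ω, ε * lap (fun y => Z - Φ ε y) x = c * Real.sinh (Z - Φ ε x) := by
      intro x hx
      have hls := lap_sub hΩopen hx
        (contDiffOn_const : ContDiffOn ℝ 2 (fun _ => Z) Ω) (hΦC2 ε hεpos)
      rw [hls, lap_const]
      have h1 := hPB ε hεpos x hx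
      have h2 := hrho (Φ ε x)
      calc ε * (0 - lap (Φ ε) x) = -ε * lap (Φ ε) x := by ring
        _ = Real.exp (-(Φ ε x))/Z₁ - Real.exp (Φ ε x)/Z₂ := h1
        _ = c * Real.sinh (Z - Φ ε x) := h2
    have hPDEnu : ∀ x ∈ Ω, ε * lap (fun y => -(Z - Φ ε y)) x
        = c * Real.sinh (-(Z - Φ ε x)) := by
      intro x hx
      rw [lap_neg, Real.sinh_neg]
      have := hPDEu x hx
      linarith
    have hub : ∀ x ∈ closure Ω, Z - Φ ε x ≤ M := by
      apply max_principle_bound hΩopen hΩbdd hΩne hu2 huc hεpos hcpos hPDEu hMpos.le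
      intro x hx
      have hW := hbc ε hεpos x hx
      have h1 := hC x
      have h2 : Z ≤ |Z| := le_abs_self Z
      have h3 : -(W x) ≤ |W x| := neg_le_abs (W x)
      rw [hW, hMdef]
      linarith
    have hlb : ∀ x ∈ closure Ω, -(Z - Φ ε x) ≤ M := by
      apply max_principle_bound hΩopen hΩbdd hΩne hu2.neg huc.neg hεpos hcpos hPDEnu hMpos.le
      intro x hx
      have hW := hbc ε hεpos x hx
      have h1 := hC x
      have h2 : -Z ≤ |Z| := neg_le_abs Z
      have h3 : W x ≤ |W x| := le_abs_self (W x)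
      rw [hW, hMdef]
      linarith
    have hlampos : 0 < lam ε := Real.sqrt_pos.mpr (by positivity)
    have hlamsq : lam ε ^ 2 = c/(8*ε*r^2) := Real.sq_sqrt (by positivity)
    have hcond : ε * (2*(lam ε)*(d:ℝ) + 4*(lam ε)^2*r^2) ≤ c := by
      have h1 : ε * (4*(lam ε)^2*r^2) = c/2 := by
        rw [hlamsq]; field_simp; ring
      have hεle : ε ≤ r^2 * c / (2*(d:ℝ)^2) := hεlt.le
      have hkey : 2*ε*(d:ℝ)^2 ≤ r^2*c := by
        rw [le_div_iff₀ (by positivity)] at hεle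
        nlinarith [hεle]
      have h2 : ε * (2*(lam ε)*(d:ℝ)) ≤ c/2 := by
        have hsq : (ε * (2*(lam ε)*(d:ℝ)))^2 ≤ (c/2)^2 := by
          have hexp : (ε * (2*(lam ε)*(d:ℝ)))^2 = 4*ε^2*(d:ℝ)^2*(lam ε ^2) := by ring
          rw [hexp, hlamsq]
          have hexp2 : 4*ε^2*(d:ℝ)^2*(c/(8*ε*r^2)) = ε*(d:ℝ)^2*c/(2*r^2) := by
            field_simp; ring
          rw [hexp2, div_le_iff₀ (by positivity : (0:ℝ) < 2*r^2)]
          nlinarith [hkey, hcpos, hεpos]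
        have hnn1 : 0 ≤ ε * (2*(lam ε)*(d:ℝ)) := by positivity
        have hnn2 : 0 ≤ c/2 := by positivity
        nlinarith [hsq, hnn1, hnn2]
      have hsplit : ε * (2*(lam ε)*(d:ℝ) + 4*(lam ε)^2*r^2)
          = ε * (2*(lam ε)*(d:ℝ)) + ε * (4*(lam ε)^2*r^2) := by ring
      rw [hsplit]
      linarith
    have hB0 : 0 ≤ B ε := by
      rw [hBdef]
      apply mul_nonneg hcpos.le
      rw [← Real.sinh_zero]
      apply Real.sinh_le_sinh.mpr
      positivity
    have hpt : ∀ x₀ ∈ K, |ρ ε x₀| ≤ B ε := by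
      intro x₀ hx₀
      have hball : Metric.closedBall x₀ r ⊆ Ω := hballs x₀ hx₀
      have hbd1 : ∀ x ∈ Metric.closedBall x₀ r, (Z - Φ ε x) ≤ M :=
        fun x hx => hub x (subset_closure (hball hx))
      have hbd2 : ∀ x ∈ Metric.closedBall x₀ r, -(Z - Φ ε x) ≤ M :=
        fun x hx => hlb x (subset_closure (hball hx))
      have h1 := comparison_bound hΩopen hu2 hεpos hcpos hPDEu hrpos hMpos hlampos
        hball hbd1 hcond
      have h2 := comparison_bound hΩopen hu2.neg hεpos hcpos hPDEnu hrpos hMpos hlampos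
        hball hbd2 hcond
      have habs : |Z - Φ ε x₀| ≤ M * Real.exp (-(lam ε * r^2)) :=
        abs_le.mpr ⟨by linarith [h2], h1⟩
      have hρx : ρ ε x₀ = c * Real.sinh (Z - Φ ε x₀) := by
        rw [hρ]; exact hrho _
      rw [hρx, hBdef]
      simp only
      rw [abs_mul, abs_of_pos hcpos, Real.abs_sinh]
      apply mul_le_mul_of_nonneg_left _ hcpos.le
      exact Real.sinh_le_sinh.mpr habs
    apply Real.iSup_le _ hB0
    intro x
    apply Real.iSup_le _ hB0
    intro hx
    exact hpt x hx
  have hlower : ∀ᶠ ε in nhdsWithin (0:ℝ) (Set.Ioi 0), 0 ≤ (⨆ x ∈ K, |ρ ε x|) :=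
    Filter.Eventually.of_forall
      (fun ε => Real.iSup_nonneg (fun x => Real.iSup_nonneg (fun _ => abs_nonneg _)))
  -- B tends to 0
  have T1 : Tendsto (fun ε : ℝ => 8*ε*r^2) (nhdsWithin 0 (Set.Ioi 0))
      (nhdsWithin 0 (Set.Ioi 0)) := by
    apply tendsto_nhdsWithin_of_tendsto_nhds_of_eventually_within
    · have hcont : Continuous (fun ε : ℝ => 8*ε*r^2) :=
        (continuous_const.mul continuous_id).mul continuous_const
      have := hcont.tendsto 0
      simp only [mul_zero, zero_mul] at this
      exact this.mono_left nhdsWithin_le_nhds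
    · filter_upwards [self_mem_nhdsWithin] with ε hε
      have : (0:ℝ) < ε := hε
      have : (0:ℝ) < 8*ε*r^2 := by positivity
      exact this
  have T2 : Tendsto (fun ε : ℝ => c/(8*ε*r^2)) (nhdsWithin 0 (Set.Ioi 0)) atTop := by
    have h1 := T1.inv_tendsto_nhdsGT_zero
    have h2 : Tendsto (fun ε : ℝ => c * (8*ε*r^2)⁻¹) (nhdsWithin 0 (Set.Ioi 0)) atTop :=
      h1.const_mul_atTop hcpos
    simpa [div_eq_mul_inv] using h2
  have Tsqrt : Tendsto Real.sqrt atTop atTop := by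
    apply Filter.tendsto_atTop_atTop.mpr
    intro b
    refine ⟨(max b 0)^2, fun a ha => ?_⟩
    calc b ≤ max b 0 := le_max_left _ _
      _ = Real.sqrt ((max b 0)^2) := (Real.sqrt_sq (le_max_right _ _)).symm
      _ ≤ Real.sqrt a := Real.sqrt_le_sqrt ha
  have T3 : Tendsto lam (nhdsWithin (0:ℝ) (Set.Ioi 0)) atTop := by
    rw [hlamdef]
    exact Tsqrt.comp T2
  have T4 : Tendsto (fun ε => lam ε * r^2) (nhdsWithin (0:ℝ) (Set.Ioi 0)) atTop :=
    T3.atTop_mul_const (by positivity)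
  have T5 : Tendsto (fun ε => -(lam ε * r^2)) (nhdsWithin (0:ℝ) (Set.Ioi 0)) atBot :=
    tendsto_neg_atTop_atBot.comp T4
  have T6 : Tendsto (fun ε => Real.exp (-(lam ε * r^2))) (nhdsWithin (0:ℝ) (Set.Ioi 0)) (nhds 0) :=
    Real.tendsto_exp_atBot.comp T5
  have T7 : Tendsto (fun ε => M * Real.exp (-(lam ε * r^2)))
      (nhdsWithin (0:ℝ) (Set.Ioi 0)) (nhds 0) := by
    have := T6.const_mul M
    simpa using this
  have T8 : Tendsto (fun ε => Real.sinh (M * Real.exp (-(lam ε * r^2))))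
      (nhdsWithin (0:ℝ) (Set.Ioi 0)) (nhds 0) := by
    have := (Real.continuous_sinh.tendsto 0).comp T7
    simpa [Real.sinh_zero, Function.comp_def] using this
  have hBtend : Tendsto B (nhdsWithin (0:ℝ) (Set.Ioi 0)) (nhds 0) := by
    rw [hBdef]
    have := T8.const_mul c
    simpa using this
  exact tendsto_of_tendsto_of_tendsto_of_le_of_le' tendsto_const_nhds hBtend hlower hupper
end

section
/- Let Ω ⊆ ℝ^d be a bounded measurable set of positive Lebesgue measure |Ω| and let Φ : Ω → ℝ be measurable with both e^{Φ} and e^{-Φ} integrable on Ω. Set A = |Ω|^{-1} ∫_Ω e^{-Φ} dx. Then ∫_Ω e^{Φ} dx · ∫_Ω e^{-Φ} dx ≥ |Ω|² + ( ∫_Ω |1 − e^{-Φ}/A| dx )². -/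
open MeasureTheory Real Filter Set Topology

/-- Quantitative Cauchy–Schwarz lower bound for the product of partition functions:
if `e^Φ` and `e^{-Φ}` are integrable on a bounded measurable set `Ω` of positive
measure and `A = |Ω|⁻¹ ∫_Ω e^{-Φ}`, then
`∫_Ω e^{Φ} · ∫_Ω e^{-Φ} ≥ |Ω|² + (∫_Ω |1 − e^{-Φ}/A|)²`. -/
theorem partition_product_lower_bound
    {d : ℕ} (Ω : Set (EuclideanSpace ℝ (Fin d)))
    (hΩmeas : MeasurableSet Ω) (hΩbdd : Bornology.IsBounded Ω)
    (hΩpos : 0 < (volume Ω).toReal)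
    (Φ : EuclideanSpace ℝ (Fin d) → ℝ)
    (hΦmeas : AEMeasurable Φ (volume.restrict Ω))
    (hint₁ : IntegrableOn (fun x => Real.exp (Φ x)) Ω)
    (hint₂ : IntegrableOn (fun x => Real.exp (-(Φ x))) Ω)
    (A : ℝ) (hA : A = ((volume Ω).toReal)⁻¹ * ∫ x in Ω, Real.exp (-(Φ x))) :
    (∫ x in Ω, Real.exp (Φ x)) * ∫ x in Ω, Real.exp (-(Φ x))
      ≥ (volume Ω).toReal ^ 2 + (∫ x in Ω, |1 - Real.exp (-(Φ x)) / A|) ^ 2 := by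
  set M := (volume Ω).toReal with hM
  have hfin : volume Ω ≠ ⊤ := hΩbdd.measure_lt_top.ne
  haveI : IsFiniteMeasure (volume.restrict Ω : Measure (EuclideanSpace ℝ (Fin d))) := by
    constructor
    rw [Measure.restrict_apply_univ]
    exact hΩbdd.measure_lt_top
  set I₁ := ∫ x in Ω, Real.exp (Φ x) with hI₁
  set I₂ := ∫ x in Ω, Real.exp (-(Φ x)) with hI₂
  -- positivity of I₂
  have hI₂pos : 0 < I₂ := by
    rw [hI₂]
    refine (integral_pos_iff_support_of_nonneg ?_ hint₂).2 ?_
    · intro x; positivity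
    · have : (Function.support fun x => Real.exp (-(Φ x))) = Set.univ := by
        ext x; simp [Function.support, Real.exp_ne_zero]
      rw [this, Measure.restrict_apply_univ]
      exact (ENNReal.toReal_pos_iff.mp hΩpos).1
  have hMpos : 0 < M := hΩpos
  have hApos : 0 < A := by rw [hA]; positivity
  have hI₂eq : I₂ = A * M := by rw [hA]; field_simp
  have hμuniv : ((volume.restrict Ω : Measure (EuclideanSpace ℝ (Fin d))) Set.univ).toReal
      = M := by rw [Measure.restrict_apply_univ, hM]
  -- pointwise identity for the key quadratic term
  have hpt : ∀ x, (Real.exp (-(Φ x)) - A) ^ 2 * Real.exp (Φ x)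
      = Real.exp (-(Φ x)) - 2 * A + A ^ 2 * Real.exp (Φ x) := by
    intro x
    have h1 : Real.exp (-(Φ x)) * Real.exp (Φ x) = 1 := by
      rw [← Real.exp_add]; simp
    linear_combination (Real.exp (-(Φ x)) - 2 * A) * h1
  set J := ∫ x in Ω, (Real.exp (-(Φ x)) - A) ^ 2 * Real.exp (Φ x) with hJdef
  have hint' : Integrable (fun x => Real.exp (-(Φ x)) - 2 * A + A ^ 2 * Real.exp (Φ x))
      (volume.restrict Ω) :=
    (hint₂.sub (integrable_const (2 * A))).add (hint₁.const_mul (A ^ 2))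
  have hJint : Integrable (fun x => (Real.exp (-(Φ x)) - A) ^ 2 * Real.exp (Φ x))
      (volume.restrict Ω) :=
    hint'.congr (Eventually.of_forall fun x => (hpt x).symm)
  have hJval : J = I₂ - 2 * A * M + A ^ 2 * I₁ := by
    have h1 : Integrable (fun x => Real.exp (-(Φ x)) - 2 * A) (volume.restrict Ω) :=
      hint₂.sub (integrable_const (2 * A))
    have h2 : Integrable (fun x => A ^ 2 * Real.exp (Φ x)) (volume.restrict Ω) :=
      hint₁.const_mul (A ^ 2)
    rw [hJdef]
    rw [integral_congr_ae (Eventually.of_forall hpt)]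
    rw [integral_add h1 h2, integral_sub hint₂ (integrable_const (2 * A)), integral_const,
      integral_const_mul, measureReal_def, hμuniv]
    simp only [smul_eq_mul]
    ring
  have hJnonneg : 0 ≤ J := by
    rw [hJdef]
    refine integral_nonneg fun x => ?_
    positivity
  -- the absolute-deviation integral
  set D := ∫ x in Ω, |Real.exp (-(Φ x)) - A| with hDdef
  have hDnonneg : 0 ≤ D := integral_nonneg fun x => abs_nonneg _
  -- rewrite the target deviation integral
  have hDrel : (∫ x in Ω, |1 - Real.exp (-(Φ x)) / A|) = D * A⁻¹ := by
    have h : ∀ x : EuclideanSpace ℝ (Fin d),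
        |1 - Real.exp (-(Φ x)) / A| = |Real.exp (-(Φ x)) - A| * A⁻¹ := by
      intro x
      rw [show (1 : ℝ) - Real.exp (-(Φ x)) / A = (A - Real.exp (-(Φ x))) / A by
        field_simp, abs_div, abs_of_pos hApos, abs_sub_comm, div_eq_mul_inv]
    simp_rw [h]
    rw [integral_mul_const, hDdef]
  -- Cauchy–Schwarz
  have hmeasv : AEMeasurable (fun x => Real.exp (-(Φ x))) (volume.restrict Ω) :=
    Real.measurable_exp.comp_aemeasurable hΦmeas.neg
  have hmeasf : AEMeasurable (fun x => |Real.exp (-(Φ x)) - A| * Real.exp (Φ x / 2))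
      (volume.restrict Ω) :=
    (continuous_abs.measurable.comp_aemeasurable (hmeasv.sub aemeasurable_const)).mul
      (Real.measurable_exp.comp_aemeasurable (hΦmeas.div_const 2))
  have hmeasg : AEMeasurable (fun x => Real.exp (-(Φ x) / 2)) (volume.restrict Ω) :=
    Real.measurable_exp.comp_aemeasurable (hΦmeas.neg.div_const 2)
  have hfsq : ∀ x : EuclideanSpace ℝ (Fin d),
      (|Real.exp (-(Φ x)) - A| * Real.exp (Φ x / 2)) ^ 2
        = (Real.exp (-(Φ x)) - A) ^ 2 * Real.exp (Φ x) := by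
    intro x
    rw [mul_pow, sq_abs, sq (Real.exp (Φ x / 2)), ← Real.exp_add, add_halves]
  have hgsq : ∀ x : EuclideanSpace ℝ (Fin d),
      (Real.exp (-(Φ x) / 2)) ^ 2 = Real.exp (-(Φ x)) := by
    intro x
    rw [sq, ← Real.exp_add, add_halves]
  have htwo : (2 : ENNReal) = ENNReal.ofReal (2 : ℝ) := by norm_num
  have hmemf : MemLp (fun x => |Real.exp (-(Φ x)) - A| * Real.exp (Φ x / 2))
      (ENNReal.ofReal (2 : ℝ)) (volume.restrict Ω) := by
    rw [← htwo, memLp_two_iff_integrable_sq hmeasf.aestronglyMeasurable]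
    exact hJint.congr (Eventually.of_forall fun x => (hfsq x).symm)
  have hmemg : MemLp (fun x => Real.exp (-(Φ x) / 2)) (ENNReal.ofReal (2 : ℝ))
      (volume.restrict Ω) := by
    rw [← htwo, memLp_two_iff_integrable_sq hmeasg.aestronglyMeasurable]
    exact hint₂.congr (Eventually.of_forall fun x => (hgsq x).symm)
  have hconj : Real.HolderConjugate 2 2 := ⟨by norm_num, by norm_num, by norm_num⟩
  have hCS0 := integral_mul_le_Lp_mul_Lq_of_nonneg (μ := volume.restrict Ω) hconj
    (Eventually.of_forall fun x => mul_nonneg (abs_nonneg _) (Real.exp_pos _).le)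
    (Eventually.of_forall fun x => (Real.exp_pos _).le)
    hmemf hmemg
  -- simplify hCS0
  have hfg : ∀ x : EuclideanSpace ℝ (Fin d),
      (|Real.exp (-(Φ x)) - A| * Real.exp (Φ x / 2)) * Real.exp (-(Φ x) / 2)
        = |Real.exp (-(Φ x)) - A| := by
    intro x
    have h0 : Φ x / 2 + -(Φ x) / 2 = 0 := by ring
    rw [mul_assoc, ← Real.exp_add, h0, Real.exp_zero, mul_one]
  have hCS : D ^ 2 ≤ J * I₂ := by
    have e1 : (∫ x in Ω, (|Real.exp (-(Φ x)) - A| * Real.exp (Φ x / 2))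
        * Real.exp (-(Φ x) / 2)) = D := by
      rw [hDdef]; exact integral_congr_ae (Eventually.of_forall hfg)
    have e2 : (∫ x in Ω, (|Real.exp (-(Φ x)) - A| * Real.exp (Φ x / 2)) ^ (2 : ℝ)) = J := by
      rw [hJdef]
      refine integral_congr_ae (Eventually.of_forall fun x => ?_)
      beta_reduce
      rw [Real.rpow_two]
      exact hfsq x
    have e3 : (∫ x in Ω, (Real.exp (-(Φ x) / 2)) ^ (2 : ℝ)) = I₂ := by
      rw [hI₂]
      refine integral_congr_ae (Eventually.of_forall fun x => ?_)
      beta_reduce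
      rw [Real.rpow_two]
      exact hgsq x
    rw [e1, e2, e3] at hCS0
    have hs1 : J ^ (1 / 2 : ℝ) = Real.sqrt J := (Real.sqrt_eq_rpow J).symm
    have hs2 : I₂ ^ (1 / 2 : ℝ) = Real.sqrt I₂ := (Real.sqrt_eq_rpow I₂).symm
    rw [hs1, hs2] at hCS0
    nlinarith [Real.sq_sqrt hJnonneg, Real.sq_sqrt hI₂pos.le, Real.sqrt_nonneg J,
      Real.sqrt_nonneg I₂, hDnonneg]
  -- conclude
  rw [ge_iff_le, hDrel, hI₂eq]
  have hA2 : (0 : ℝ) < A ^ 2 := by positivity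
  have h1 : D ^ 2 ≤ (A ^ 2 * I₁ - A * M) * (A * M) := by
    have hJ' : J = A ^ 2 * I₁ - A * M := by rw [hJval, hI₂eq]; ring
    rw [hJ', hI₂eq] at hCS
    exact hCS
  have h2 : (D * A⁻¹) ^ 2 = D ^ 2 / A ^ 2 := by
    rw [mul_pow, inv_pow, div_eq_mul_inv]
  rw [h2, ← sub_nonneg]
  have h3 : D ^ 2 / A ^ 2 ≤ I₁ * (A * M) - M ^ 2 := by
    rw [div_le_iff₀ hA2]
    nlinarith [h1]
  linarith
end
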